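/- arXiv:2404.11893 — 4 statements merged into one kernel-verified Lean document; each statement's English description precedes it below -/
import Mathlib

section
/- Let F : ℝ^d → ℝ be differentiable with L-Lipschitz gradient, let ν > 0 and θ > 0, and fix x ∈ ℝ^d. Let G : Ω → ℝ^d be a square-integrable random vector on a probability space with E[G] = ∇^{FD}F(x) and E‖G − ∇^{FD}F(x)‖² ≤ θ²·‖∇^{FD}F(x)‖². If the step size satisfies 0 < α ≤ 1/(4(1 + θ²)L), then E[F(x − α·G)] ≤ F(x) − (α/4)·‖∇F(x)‖² + (3·α·L²·ν²·d)/16. -/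
/-!
By the descent lemma `|F (x + v) - F x - ⟪∇F x, v⟫| ≤ L/2 ‖v‖²`, taken in expectation over
the step `v = -α G`, the left-hand side is at most `F x - α ⟪∇F x, g⟫ + (L α²/2) E‖G‖²`
with `g = ∇^{FD}F(x)`. The variance bound gives `E‖G‖² ≤ (1 + θ²) ‖g‖²`, and the step size
makes the last term at most `(α/8) ‖g‖²`. Polarizing `⟪∇F x, g⟫` then leaves
`-(α/2) ‖∇F x‖² + (α/2) ‖g - ∇F x‖²`, and the descent lemma along each coordinate direction
`ν eⱼ` shows that every coordinate of `g - ∇F x` is at most `L ν / 2` in absolute value.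
-/

open MeasureTheory RealInnerProductSpace

/-- The forward finite-difference gradient estimator
`∇^{FD}F(x) := ∑ⱼ ((F(x + ν eⱼ) − F(x))/ν) eⱼ`. -/
noncomputable def fdGrad {d : ℕ} (F : EuclideanSpace ℝ (Fin d) → ℝ) (ν : ℝ)
    (x : EuclideanSpace ℝ (Fin d)) : EuclideanSpace ℝ (Fin d) :=
  ∑ j, ((F (x + ν • EuclideanSpace.single j (1 : ℝ)) - F x) / ν) •
    EuclideanSpace.single j (1 : ℝ)

section Descent

variable {E : Type*} [NormedAddCommGroup E] [InnerProductSpace ℝ E] [CompleteSpace E]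
  {F : E → ℝ} {L : ℝ}

theorem abs_sub_sub_inner_gradient_le (hF : Differentiable ℝ F)
    (hLip : ∀ x y, ‖gradient F x - gradient F y‖ ≤ L * ‖x - y‖) (x v : E) :
    |F (x + v) - F x - ⟪gradient F x, v⟫| ≤ L / 2 * ‖v‖ ^ 2 := by
  have hderiv (t : ℝ) : HasDerivAt (fun t : ℝ => F (x + t • v) - F x - t * ⟪gradient F x, v⟫)
      ⟪gradient F (x + t • v) - gradient F x, v⟫ t := by
    have hline : HasDerivAt (fun t : ℝ => x + t • v) v t := by
      simpa using ((hasDerivAt_id t).smul_const v).const_add x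
    have hcomp := (hF (x + t • v)).hasGradientAt.hasFDerivAt.comp_hasDerivAt t hline
    exact ((hcomp.sub_const (F x)).sub (hasDerivAt_mul_const _)).congr_deriv
      (by simp [inner_sub_left])
  have hbound (t : ℝ) (ht : t ∈ Set.Ico (0 : ℝ) 1) :
      ‖⟪gradient F (x + t • v) - gradient F x, v⟫‖ ≤ L * ‖v‖ ^ 2 * t := by
    calc ‖⟪gradient F (x + t • v) - gradient F x, v⟫‖
        ≤ ‖gradient F (x + t • v) - gradient F x‖ * ‖v‖ := norm_inner_le_norm _ _
      _ ≤ L * ‖t • v‖ * ‖v‖ := by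
          gcongr
          simpa using hLip (x + t • v) x
      _ = L * ‖v‖ ^ 2 * t := by rw [norm_smul, Real.norm_of_nonneg ht.1]; ring
  have hB (t : ℝ) : HasDerivAt (fun t : ℝ => L / 2 * ‖v‖ ^ 2 * t ^ 2) (L * ‖v‖ ^ 2 * t) t :=
    ((hasDerivAt_pow 2 t).const_mul _).congr_deriv (by ring)
  -- fencing against the parabola avoids integrating `∇F` along the segment
  simpa using image_norm_le_of_norm_deriv_right_le_deriv_boundary
    (fun t _ => (hderiv t).continuousAt.continuousWithinAt)
    (fun t _ => (hderiv t).hasDerivWithinAt) (by simp) hB hbound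
    (Set.right_mem_Icc.2 zero_le_one)

variable {Ω : Type*} {mΩ : MeasurableSpace Ω} {P : Measure Ω}

theorem integrable_comp_add_of_lipschitz_gradient [IsFiniteMeasure P] (hF : Differentiable ℝ F)
    (hLip : ∀ x y, ‖gradient F x - gradient F y‖ ≤ L * ‖x - y‖) (x : E) {V : Ω → E}
    (hV : MemLp V 2 P) : Integrable (fun ω => F (x + V ω)) P := by
  have hlin : Integrable (fun ω => F x + ⟪gradient F x, V ω⟫) P :=
    (integrable_const _).add ((hV.integrable one_le_two).const_inner _)
  have hquad : Integrable (fun ω => L / 2 * ‖V ω‖ ^ 2) P := hV.integrable_norm_pow'.const_mul _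
  have hbound (ω : Ω) := abs_le.mp (abs_sub_sub_inner_gradient_le hF hLip x (V ω))
  refine integrable_of_le_of_le
    (g₁ := fun ω => F x + ⟪gradient F x, V ω⟫ - L / 2 * ‖V ω‖ ^ 2)
    (g₂ := fun ω => F x + ⟪gradient F x, V ω⟫ + L / 2 * ‖V ω‖ ^ 2)
    (hF.continuous.comp_aestronglyMeasurable (aestronglyMeasurable_const.add hV.1))
    (ae_of_all _ fun ω => by linarith [hbound ω]) (ae_of_all _ fun ω => by linarith [hbound ω])
    (hlin.sub hquad) (hlin.add hquad)

theorem integral_comp_add_le_of_lipschitz_gradient [IsProbabilityMeasure P]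
    (hF : Differentiable ℝ F) (hLip : ∀ x y, ‖gradient F x - gradient F y‖ ≤ L * ‖x - y‖)
    (x : E) {V : Ω → E} (hV : MemLp V 2 P) :
    ∫ ω, F (x + V ω) ∂P
      ≤ F x + ⟪gradient F x, ∫ ω, V ω ∂P⟫ + L / 2 * ∫ ω, ‖V ω‖ ^ 2 ∂P := by
  have hVi : Integrable V P := hV.integrable one_le_two
  have hlin : Integrable (fun ω => F x + ⟪gradient F x, V ω⟫) P :=
    (integrable_const _).add (hVi.const_inner _)
  calc ∫ ω, F (x + V ω) ∂P
      ≤ ∫ ω, (F x + ⟪gradient F x, V ω⟫ + L / 2 * ‖V ω‖ ^ 2) ∂P := by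
        refine integral_mono (integrable_comp_add_of_lipschitz_gradient hF hLip x hV)
          (hlin.add (hV.integrable_norm_pow'.const_mul _)) fun ω => ?_
        linarith [(abs_le.mp (abs_sub_sub_inner_gradient_le hF hLip x (V ω))).2]
    _ = F x + ⟪gradient F x, ∫ ω, V ω ∂P⟫ + L / 2 * ∫ ω, ‖V ω‖ ^ 2 ∂P := by
        rw [integral_add hlin (hV.integrable_norm_pow'.const_mul _),
          integral_add (integrable_const _) (hVi.const_inner _), integral_const,
          integral_inner hVi, integral_const_mul]
        simp

theorem integral_comp_sub_smul_le_of_lipschitz_gradient [IsProbabilityMeasure P]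
    (hF : Differentiable ℝ F) (hLip : ∀ x y, ‖gradient F x - gradient F y‖ ≤ L * ‖x - y‖)
    (x : E) {G : Ω → E} (hG : MemLp G 2 P) (α : ℝ) :
    ∫ ω, F (x - α • G ω) ∂P
      ≤ F x - α * ⟪gradient F x, ∫ ω, G ω ∂P⟫ + L / 2 * α ^ 2 * ∫ ω, ‖G ω‖ ^ 2 ∂P := by
  have h := integral_comp_add_le_of_lipschitz_gradient hF hLip x (hG.const_smul α).neg
  simp only [Pi.neg_apply, Pi.smul_apply, ← sub_eq_add_neg, integral_neg, integral_smul,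
    inner_neg_right, real_inner_smul_right, norm_neg, norm_smul, Real.norm_eq_abs, mul_pow,
    sq_abs, integral_const_mul] at h
  linarith

end Descent

section Moments

variable {Ω E : Type*} {mΩ : MeasurableSpace Ω} {P : Measure Ω} [IsProbabilityMeasure P]
  [NormedAddCommGroup E] [InnerProductSpace ℝ E] [CompleteSpace E]

theorem integral_norm_sq_eq_integral_norm_sub_integral_sq_add {V : Ω → E} (hV : MemLp V 2 P) :
    ∫ ω, ‖V ω‖ ^ 2 ∂P = ∫ ω, ‖V ω - ∫ ω, V ω ∂P‖ ^ 2 ∂P + ‖∫ ω, V ω ∂P‖ ^ 2 := by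
  set m := ∫ ω, V ω ∂P
  have hVi : Integrable V P := hV.integrable one_le_two
  have hinner : ∫ ω, ⟪V ω, m⟫ ∂P = ‖m‖ ^ 2 := by
    simp_rw [real_inner_comm m]
    rw [integral_inner hVi, real_inner_self_eq_norm_sq]
  simp_rw [norm_sub_sq_real]
  rw [integral_add _ (integrable_const _), integral_sub hV.integrable_norm_pow'
    ((hVi.inner_const m).const_mul 2), integral_const_mul, hinner]
  · simp only [integral_const, probReal_univ, smul_eq_mul, one_mul]
    ring
  · exact hV.integrable_norm_pow'.sub ((hVi.inner_const m).const_mul 2)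

end Moments

section FiniteDifference

variable {d : ℕ} {F : EuclideanSpace ℝ (Fin d) → ℝ} {L ν : ℝ}

theorem fdGrad_apply (x : EuclideanSpace ℝ (Fin d)) (j : Fin d) :
    fdGrad F ν x j = (F (x + ν • EuclideanSpace.single j (1 : ℝ)) - F x) / ν := by
  simp [fdGrad, Pi.single_apply]

theorem abs_fdGrad_sub_gradient_apply_le (hF : Differentiable ℝ F)
    (hLip : ∀ x y, ‖gradient F x - gradient F y‖ ≤ L * ‖x - y‖) (hν : ν ≠ 0)
    (x : EuclideanSpace ℝ (Fin d)) (j : Fin d) :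
    |(fdGrad F ν x - gradient F x) j| ≤ L * |ν| / 2 := by
  have h := abs_sub_sub_inner_gradient_le hF hLip x (ν • EuclideanSpace.single j (1 : ℝ))
  rw [real_inner_smul_right, EuclideanSpace.inner_single_right, norm_smul,
    PiLp.norm_single, norm_one, mul_one, Real.norm_eq_abs, sq_abs] at h
  have hj : (fdGrad F ν x - gradient F x) j
      = (F (x + ν • EuclideanSpace.single j (1 : ℝ)) - F x - ν * gradient F x j) / ν := by
    rw [PiLp.sub_apply, fdGrad_apply]
    field_simp
  rw [hj, abs_div, div_le_iff₀ (abs_pos.mpr hν)]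
  calc _ ≤ L / 2 * ν ^ 2 := by simpa using h
    _ = L * |ν| / 2 * |ν| := by rw [← sq_abs]; ring

theorem norm_fdGrad_sub_gradient_sq_le (hF : Differentiable ℝ F)
    (hLip : ∀ x y, ‖gradient F x - gradient F y‖ ≤ L * ‖x - y‖) (hν : ν ≠ 0)
    (x : EuclideanSpace ℝ (Fin d)) :
    ‖fdGrad F ν x - gradient F x‖ ^ 2 ≤ L ^ 2 * ν ^ 2 * d / 4 := by
  rw [EuclideanSpace.real_norm_sq_eq]
  calc ∑ j, (fdGrad F ν x - gradient F x) j ^ 2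
      ≤ ∑ _j : Fin d, (L * |ν| / 2) ^ 2 := by
        refine Finset.sum_le_sum fun j _ => ?_
        obtain ⟨hlow, hup⟩ := abs_le.mp (abs_fdGrad_sub_gradient_apply_le hF hLip hν x j)
        exact sq_le_sq' hlow hup
    _ = L ^ 2 * ν ^ 2 * d / 4 := by
        rw [Finset.sum_const, Finset.card_univ, Fintype.card_fin, nsmul_eq_mul, div_pow,
          mul_pow, sq_abs]
        ring

end FiniteDifference

theorem per_iteration_decrease_FD_general
    {d : ℕ} {Ω : Type*} {mΩ : MeasurableSpace Ω}
    (P : Measure Ω) [IsProbabilityMeasure P]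
    (F : EuclideanSpace ℝ (Fin d) → ℝ) (L ν θ α : ℝ)
    (hF : Differentiable ℝ F)
    (hLip : ∀ x y, ‖gradient F x - gradient F y‖ ≤ L * ‖x - y‖)
    (hν : 0 < ν)
    (x : EuclideanSpace ℝ (Fin d))
    (G : Ω → EuclideanSpace ℝ (Fin d)) (hG : MemLp G 2 P)
    (hmean : ∫ ω, G ω ∂P = fdGrad F ν x)
    (hvar : ∫ ω, ‖G ω - fdGrad F ν x‖ ^ 2 ∂P ≤ θ ^ 2 * ‖fdGrad F ν x‖ ^ 2)
    (hα0 : 0 < α) (hα : α ≤ 1 / (4 * (1 + θ ^ 2) * L)) :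
    ∫ ω, F (x - α • G ω) ∂P
      ≤ F x - (α / 4) * ‖gradient F x‖ ^ 2 + 3 * α * L ^ 2 * ν ^ 2 * d / 16 := by
  set g := fdGrad F ν x
  set γ := gradient F x
  have h4L : 0 < 4 * (1 + θ ^ 2) * L := one_div_pos.mp (hα0.trans_le hα)
  have hL : 0 < L := pos_of_mul_pos_right h4L (by positivity)
  have hstep : α * (1 + θ ^ 2) * L ≤ 1 / 4 := by
    rw [le_div_iff₀ h4L] at hα
    linarith
  have hdesc := integral_comp_sub_smul_le_of_lipschitz_gradient (P := P) hF hLip x hG α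
  rw [hmean] at hdesc
  have hmoment : ∫ ω, ‖G ω‖ ^ 2 ∂P ≤ (1 + θ ^ 2) * ‖g‖ ^ 2 := by
    rw [integral_norm_sq_eq_integral_norm_sub_integral_sq_add hG, hmean]
    linarith
  have herr : ‖g - γ‖ ^ 2 ≤ L ^ 2 * ν ^ 2 * d / 4 := norm_fdGrad_sub_gradient_sq_le hF hLip hν.ne' x
  have hpolar : ‖g - γ‖ ^ 2 = ‖g‖ ^ 2 - 2 * ⟪γ, g⟫ + ‖γ‖ ^ 2 := by
    rw [norm_sub_sq_real, real_inner_comm]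
  calc ∫ ω, F (x - α • G ω) ∂P
      ≤ F x - α * ⟪γ, g⟫ + L / 2 * α ^ 2 * ∫ ω, ‖G ω‖ ^ 2 ∂P := hdesc
    _ ≤ F x - α * ⟪γ, g⟫ + α / 8 * ‖g‖ ^ 2 := by
        have := mul_le_mul_of_nonneg_left hmoment (by positivity : 0 ≤ L / 2 * α ^ 2)
        linarith [mul_le_mul_of_nonneg_right hstep (by positivity : 0 ≤ α * ‖g‖ ^ 2)]
    _ ≤ F x - α / 2 * ‖γ‖ ^ 2 + α / 2 * ‖g - γ‖ ^ 2 := by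
        nlinarith [mul_nonneg hα0.le (sq_nonneg ‖g‖)]
    _ ≤ F x - α / 4 * ‖γ‖ ^ 2 + 3 * α * L ^ 2 * ν ^ 2 * d / 16 := by
        have : 0 ≤ α * (L ^ 2 * ν ^ 2 * d) := by positivity
        linarith [mul_le_mul_of_nonneg_left herr hα0.le, mul_nonneg hα0.le (sq_nonneg ‖γ‖)]

/-- If `F` has `L`-Lipschitz gradient, `G` is a square-integrable random
vector with `E[G] = ∇^{FD}F(x)` and `E‖G − ∇^{FD}F(x)‖² ≤ θ² ‖∇^{FD}F(x)‖²`, and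
`0 < α ≤ 1/(4(1+θ²)L)`, then
`E[F(x − α G)] ≤ F(x) − (α/4)‖∇F(x)‖² + 3 α L² ν² d / 16`. -/
theorem per_iteration_decrease_FD
    {d : ℕ} {Ω : Type*} {mΩ : MeasurableSpace Ω}
    (P : Measure Ω) [IsProbabilityMeasure P]
    (F : EuclideanSpace ℝ (Fin d) → ℝ) (L ν θ α : ℝ)
    (hF : Differentiable ℝ F)
    (hLip : ∀ x y, ‖gradient F x - gradient F y‖ ≤ L * ‖x - y‖)
    (hν : 0 < ν) (hθ : 0 < θ)
    (x : EuclideanSpace ℝ (Fin d))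
    (G : Ω → EuclideanSpace ℝ (Fin d)) (hG : MemLp G 2 P)
    (hmean : ∫ ω, G ω ∂P = fdGrad F ν x)
    (hvar : ∫ ω, ‖G ω - fdGrad F ν x‖ ^ 2 ∂P ≤ θ ^ 2 * ‖fdGrad F ν x‖ ^ 2)
    (hα0 : 0 < α) (hα : α ≤ 1 / (4 * (1 + θ ^ 2) * L)) :
    ∫ ω, F (x - α • G ω) ∂P
      ≤ F x - (α / 4) * ‖gradient F x‖ ^ 2 + 3 * α * L ^ 2 * ν ^ 2 * d / 16 :=
  per_iteration_decrease_FD_general (mΩ := mΩ) P F L ν θ α hF hLip hν x G hG hmean hvar hα0 hα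
end

section
/- Let F : ℝ^d → ℝ be differentiable and μ-strongly convex in the sense that ‖∇F(x)‖² ≥ 2μ·(F(x) − F(x*)) for all x ∈ ℝ^d, where x* is a minimizer of F and μ > 0. Let (Ω, 𝓐, P) be a probability space with a filtration (𝓕_k)_{k≥0}, and let (x_k)_{k≥0} be a sequence of random iterates in ℝ^d with each x_k 𝓕_k-measurable and each F(x_k) and ‖∇F(x_k)‖² integrable. Suppose there are constants a_1, a_2 > 0 with μ·a_1 ≤ 1 such that for every k ≥ 0, E[F(x_{k+1}) | 𝓕_k] ≤ F(x_k) − (a_1/2)·‖∇F(x_k)‖² + a_2 almost surely. Then for every k ≥ 0, E[F(x_k) − F(x*)] ≤ (1 − μ·a_1)^k · ( E[F(x_0)] − F(x*) − a_2/(μ·a_1) ) + a_2/(μ·a_1). -/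
/-!
Integrating the conditional decrease and the Polyak–Łojasiewicz inequality gives the affine
recursion `e_{k+1} ≤ (1 - μ a₁) e_k + a₂` for the expected suboptimality `e_k`, whose fixed
point is `a₂ / (μ a₁)`; the deviation from it contracts by `1 - μ a₁ ∈ [0, 1)` at each step.
-/

open MeasureTheory

theorem le_geometric_of_le_one_sub_mul_add {e : ℕ → ℝ} {ρ c : ℝ} (hρ0 : ρ ≠ 0) (hρ1 : ρ ≤ 1)
    (h : ∀ k, e (k + 1) ≤ (1 - ρ) * e k + c) (k : ℕ) :
    e k ≤ (1 - ρ) ^ k * (e 0 - c / ρ) + c / ρ := by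
  induction k with
  | zero => simp
  | succ k ih =>
    calc e (k + 1) ≤ (1 - ρ) * e k + c := h k
      _ ≤ (1 - ρ) * ((1 - ρ) ^ k * (e 0 - c / ρ) + c / ρ) + c := by gcongr
      _ = (1 - ρ) ^ (k + 1) * (e 0 - c / ρ) + c / ρ := by field_simp; ring

section

variable {Ω : Type*} {m m₀ : MeasurableSpace Ω} {P : Measure Ω}

theorem integral_le_of_condExp_le (hm : m ≤ m₀) [SigmaFinite (P.trim hm)] {f g : Ω → ℝ}
    (hg : Integrable g P) (hfg : P[f | m] ≤ᵐ[P] g) : ∫ ω, f ω ∂P ≤ ∫ ω, g ω ∂P := by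
  rw [← integral_condExp hm]
  exact integral_mono_ae integrable_condExp hg hfg

theorem integral_sub_const_of_isProbabilityMeasure [IsProbabilityMeasure P] {f : Ω → ℝ}
    (hf : Integrable f P) (c : ℝ) : ∫ ω, (f ω - c) ∂P = ∫ ω, f ω ∂P - c := by
  simp [integral_sub hf (integrable_const c)]

variable {E : Type*} [NormedAddCommGroup E] [InnerProductSpace ℝ E] [CompleteSpace E]
  {F : E → ℝ} {xstar : E} {μ a₁ a₂ : ℝ} {X Y : Ω → E}

theorem integral_suboptimality_le_of_condExp_le [IsProbabilityMeasure P] (hm : m ≤ m₀)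
    (hsc : ∀ y, 2 * μ * (F y - F xstar) ≤ ‖gradient F y‖ ^ 2) (ha₁ : 0 ≤ a₁)
    (hFX : Integrable (fun ω => F (X ω)) P) (hFY : Integrable (fun ω => F (Y ω)) P)
    (hGX : Integrable (fun ω => ‖gradient F (X ω)‖ ^ 2) P)
    (hdec : P[(fun ω => F (Y ω)) | m]
      ≤ᵐ[P] fun ω => F (X ω) - (a₁ / 2) * ‖gradient F (X ω)‖ ^ 2 + a₂) :
    ∫ ω, (F (Y ω) - F xstar) ∂P ≤ (1 - μ * a₁) * ∫ ω, (F (X ω) - F xstar) ∂P + a₂ := by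
  have hdescent : ∫ ω, F (Y ω) ∂P
      ≤ ∫ ω, F (X ω) ∂P - (a₁ / 2) * ∫ ω, ‖gradient F (X ω)‖ ^ 2 ∂P + a₂ := by
    have hb : Integrable (fun ω => F (X ω) - (a₁ / 2) * ‖gradient F (X ω)‖ ^ 2) P :=
      hFX.sub (hGX.const_mul _)
    calc ∫ ω, F (Y ω) ∂P
        ≤ ∫ ω, (F (X ω) - (a₁ / 2) * ‖gradient F (X ω)‖ ^ 2 + a₂) ∂P :=
          integral_le_of_condExp_le hm (hb.add (integrable_const _)) hdec
      _ = _ := by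
        rw [integral_add hb (integrable_const _),
          integral_sub hFX (hGX.const_mul _), integral_const_mul]
        simp
  have hPL : 2 * μ * ∫ ω, (F (X ω) - F xstar) ∂P ≤ ∫ ω, ‖gradient F (X ω)‖ ^ 2 ∂P := by
    rw [← integral_const_mul]
    exact integral_mono ((hFX.sub (integrable_const _)).const_mul _) hGX fun ω => hsc (X ω)
  rw [integral_sub_const_of_isProbabilityMeasure hFX] at hPL ⊢
  rw [integral_sub_const_of_isProbabilityMeasure hFY]
  linarith [mul_le_mul_of_nonneg_left hPL (by positivity : 0 ≤ a₁ / 2)]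

end

theorem linear_convergence_in_expectation_general
    {d : ℕ} {Ω : Type*} {mΩ : MeasurableSpace Ω}
    (P : Measure Ω) [IsProbabilityMeasure P]
    (F : EuclideanSpace ℝ (Fin d) → ℝ) (μ : ℝ) (hμ : 0 < μ)
    (xstar : EuclideanSpace ℝ (Fin d))
    (hsc : ∀ y, 2 * μ * (F y - F xstar) ≤ ‖gradient F y‖ ^ 2)
    (ℱ : Filtration ℕ mΩ)
    (x : ℕ → Ω → EuclideanSpace ℝ (Fin d))
    (hintF : ∀ k, Integrable (fun ω => F (x k ω)) P)
    (hintG : ∀ k, Integrable (fun ω => ‖gradient F (x k ω)‖ ^ 2) P)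
    (a₁ a₂ : ℝ) (ha₁ : 0 < a₁) (hμa₁ : μ * a₁ ≤ 1)
    (hdec : ∀ k, (P[(fun ω => F (x (k + 1) ω)) | ℱ k])
        ≤ᵐ[P] fun ω => F (x k ω) - (a₁ / 2) * ‖gradient F (x k ω)‖ ^ 2 + a₂) :
    ∀ k, ∫ ω, (F (x k ω) - F xstar) ∂P
      ≤ (1 - μ * a₁) ^ k * ((∫ ω, F (x 0 ω) ∂P) - F xstar - a₂ / (μ * a₁))
          + a₂ / (μ * a₁) := by
  intro k
  have hstep : ∀ k, ∫ ω, (F (x (k + 1) ω) - F xstar) ∂P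
      ≤ (1 - μ * a₁) * ∫ ω, (F (x k ω) - F xstar) ∂P + a₂ := fun k =>
    integral_suboptimality_le_of_condExp_le (ℱ.le k) hsc ha₁.le (hintF k) (hintF (k + 1))
      (hintG k) (hdec k)
  have := le_geometric_of_le_one_sub_mul_add (e := fun k => ∫ ω, (F (x k ω) - F xstar) ∂P)
    (mul_pos hμ ha₁).ne' hμa₁ hstep k
  rwa [integral_sub_const_of_isProbabilityMeasure (hintF 0)] at this

/-- (Linear convergence lemma.) Let `F` be differentiable and
`μ`-strongly convex in the PL sense `‖∇F(x)‖² ≥ 2μ(F(x) − F(x*))` with minimizer `x*`.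
If random iterates `(x_k)` adapted to a filtration `(𝓕_k)` satisfy the per-iteration
expected decrease `E[F(x_{k+1}) | 𝓕_k] ≤ F(x_k) − (a₁/2)‖∇F(x_k)‖² + a₂` a.s.
with `a₁, a₂ > 0`, `μ a₁ ≤ 1`, then for every `k`,
`E[F(x_k) − F(x*)] ≤ (1 − μ a₁)^k (E[F(x₀)] − F(x*) − a₂/(μ a₁)) + a₂/(μ a₁)`. -/
theorem linear_convergence_in_expectation
    {d : ℕ} {Ω : Type*} {mΩ : MeasurableSpace Ω}
    (P : Measure Ω) [IsProbabilityMeasure P]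
    (F : EuclideanSpace ℝ (Fin d) → ℝ) (μ : ℝ) (hμ : 0 < μ)
    (hF : Differentiable ℝ F)
    (xstar : EuclideanSpace ℝ (Fin d)) (hmin : ∀ y, F xstar ≤ F y)
    (hsc : ∀ y, 2 * μ * (F y - F xstar) ≤ ‖gradient F y‖ ^ 2)
    (ℱ : Filtration ℕ mΩ)
    (x : ℕ → Ω → EuclideanSpace ℝ (Fin d))
    (hadapted : ∀ k, StronglyMeasurable[ℱ k] (x k))
    (hintF : ∀ k, Integrable (fun ω => F (x k ω)) P)
    (hintG : ∀ k, Integrable (fun ω => ‖gradient F (x k ω)‖ ^ 2) P)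
    (a₁ a₂ : ℝ) (ha₁ : 0 < a₁) (ha₂ : 0 < a₂) (hμa₁ : μ * a₁ ≤ 1)
    (hdec : ∀ k, (P[(fun ω => F (x (k + 1) ω)) | ℱ k])
        ≤ᵐ[P] fun ω => F (x k ω) - (a₁ / 2) * ‖gradient F (x k ω)‖ ^ 2 + a₂) :
    ∀ k, ∫ ω, (F (x k ω) - F xstar) ∂P
      ≤ (1 - μ * a₁) ^ k * ((∫ ω, F (x 0 ω) ∂P) - F xstar - a₂ / (μ * a₁))
          + a₂ / (μ * a₁) :=
  linear_convergence_in_expectation_general P F μ hμ xstar hsc ℱ x hintF hintG a₁ a₂ ha₁ hμa₁ hdec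
end

section
/- Let F : ℝ^d → ℝ be differentiable and μ-strongly convex in the sense that ‖∇F(x)‖² ≥ 2μ·(F(x) − F(x*)) for all x ∈ ℝ^d, where x* is a minimizer of F and μ > 0. Let (x_k)_{k≥0} be random iterates on a probability space as in the linear-convergence setting: x_k is 𝓕_k-measurable for a filtration (𝓕_k), F(x_k) and ‖∇F(x_k)‖² are integrable, and for constants a_1, a_2 > 0 with μ·a_1 ≤ 1 one has E[F(x_{k+1}) | 𝓕_k] ≤ F(x_k) − (a_1/2)·‖∇F(x_k)‖² + a_2 almost surely for all k. Define z_k := (1 − μ·a_1)^k·( E[F(x_0)] − F(x*) − a_2/(μ·a_1) ) + a_2/(μ·a_1) and assume z_k > 0. Then for every p ∈ (0,1] and every k ≥ 0, with probability at least 1 − p, F(x_k) − F(x*) − a_2/(p·μ·a_1) ≤ ((1 − μ·a_1)^k/p)·( E[F(x_0)] − F(x*) − a_2/(μ·a_1) ). -/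
/-!
Taking expectations in the descent condition and bounding `‖∇F‖²` from below by the
Polyak–Łojasiewicz inequality gives the contraction
`E[F(x_{k+1})] − F(x*) ≤ (1 − μ a₁)(E[F(x_k)] − F(x*)) + a₂`, whose fixed point is
`a₂ / (μ a₁)`; unrolling it bounds the expected gap `E[F(x_k)] − F(x*)` by `z_k`.
Markov's inequality for the nonnegative gap at level `z_k / p` then gives the claim.
-/

open MeasureTheory

theorem le_pow_mul_sub_add_of_le_mul_add {u : ℕ → ℝ} {ρ b s : ℝ} (hρ : 0 ≤ ρ)
    (hs : ρ * s + b = s) (h : ∀ n, u (n + 1) ≤ ρ * u n + b) (n : ℕ) :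
    u n ≤ ρ ^ n * (u 0 - s) + s := by
  induction n with
  | zero => simp
  | succ n ih =>
    calc u (n + 1) ≤ ρ * u n + b := h n
      _ ≤ ρ * (ρ ^ n * (u 0 - s) + s) + b := by gcongr
      _ = ρ ^ (n + 1) * (u 0 - s) + s := by linear_combination hs

section Probability

variable {Ω : Type*} {m mΩ : MeasurableSpace Ω} {P : Measure Ω} [IsProbabilityMeasure P]

theorem ofReal_one_sub_integral_div_le_measure_lt {Y : Ω → ℝ} (hY : 0 ≤ᵐ[P] Y)
    (hint : Integrable Y P) {t : ℝ} (ht : 0 < t) :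
    ENNReal.ofReal (1 - (∫ ω, Y ω ∂P) / t) ≤ P {ω | Y ω < t} := by
  have markov : P {ω | t ≤ Y ω} ≤ ENNReal.ofReal ((∫ ω, Y ω ∂P) / t) := by
    rw [← ofReal_measureReal]
    exact ENNReal.ofReal_le_ofReal
      ((le_div_iff₀' ht).mpr (mul_meas_ge_le_integral_of_nonneg hY hint t))
  -- a covering argument instead of `measure_compl`, so `Y` need not be measurable
  have cover : 1 ≤ P {ω | t ≤ Y ω} + P {ω | Y ω < t} := by
    calc 1 = P ({ω | t ≤ Y ω} ∪ {ω | Y ω < t}) := by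
          rw [← measure_univ (μ := P)]
          congr 1
          ext ω
          simpa using le_or_gt t (Y ω)
      _ ≤ _ := measure_union_le _ _
  calc ENNReal.ofReal (1 - (∫ ω, Y ω ∂P) / t)
      = 1 - ENNReal.ofReal ((∫ ω, Y ω ∂P) / t) := by
        rw [ENNReal.ofReal_sub _ (div_nonneg (integral_nonneg_of_ae hY) ht.le),
          ENNReal.ofReal_one]
    _ ≤ 1 - P {ω | t ≤ Y ω} := tsub_le_tsub_left markov 1
    _ ≤ P {ω | Y ω < t} := tsub_le_iff_left.mpr cover

variable {E : Type*} [NormedAddCommGroup E] [InnerProductSpace ℝ E] [CompleteSpace E]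

theorem integral_gap_le_of_condExp_le_descent (hm : m ≤ mΩ) {F : E → ℝ} {xstar : E}
    {μ a₁ a₂ : ℝ} (ha₁ : 0 ≤ a₁) (hsc : ∀ y, 2 * μ * (F y - F xstar) ≤ ‖gradient F y‖ ^ 2)
    {X Y : Ω → E} (hX : Integrable (fun ω => F (X ω)) P)
    (hdec : P[fun ω => F (Y ω) | m]
        ≤ᵐ[P] fun ω => F (X ω) - (a₁ / 2) * ‖gradient F (X ω)‖ ^ 2 + a₂) :
    (∫ ω, F (Y ω) ∂P) - F xstar ≤ (1 - μ * a₁) * ((∫ ω, F (X ω) ∂P) - F xstar) + a₂ := by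
  have descent : P[fun ω => F (Y ω) | m]
      ≤ᵐ[P] fun ω => (1 - μ * a₁) * (F (X ω) - F xstar) + (F xstar + a₂) := by
    filter_upwards [hdec] with ω hω
    nlinarith [mul_le_mul_of_nonneg_left (hsc (X ω)) ha₁]
  have hgap : Integrable (fun ω => F (X ω) - F xstar) P := hX.sub (integrable_const _)
  have key : ∫ ω, (P[fun ω => F (Y ω) | m]) ω ∂P
      ≤ ∫ ω, ((1 - μ * a₁) * (F (X ω) - F xstar) + (F xstar + a₂)) ∂P :=
    integral_mono_ae integrable_condExp ((hgap.const_mul _).add (integrable_const _)) descent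
  rw [integral_condExp hm, integral_add (hgap.const_mul _) (integrable_const _),
    integral_const_mul, integral_sub hX (integrable_const _)] at key
  simp only [integral_const, probReal_univ, one_smul] at key
  linarith

end Probability

theorem high_probability_bound_general
    {d : ℕ} {Ω : Type*} {mΩ : MeasurableSpace Ω}
    (P : Measure Ω) [IsProbabilityMeasure P]
    (F : EuclideanSpace ℝ (Fin d) → ℝ) (μ : ℝ) (hμ : 0 < μ)
    (xstar : EuclideanSpace ℝ (Fin d)) (hmin : ∀ y, F xstar ≤ F y)
    (hsc : ∀ y, 2 * μ * (F y - F xstar) ≤ ‖gradient F y‖ ^ 2)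
    (ℱ : Filtration ℕ mΩ)
    (x : ℕ → Ω → EuclideanSpace ℝ (Fin d))
    (hintF : ∀ k, Integrable (fun ω => F (x k ω)) P)
    (a₁ a₂ : ℝ) (ha₁ : 0 < a₁) (hμa₁ : μ * a₁ ≤ 1)
    (hdec : ∀ k, (P[(fun ω => F (x (k + 1) ω)) | ℱ k])
        ≤ᵐ[P] fun ω => F (x k ω) - (a₁ / 2) * ‖gradient F (x k ω)‖ ^ 2 + a₂)
    (hz : ∀ k : ℕ, 0 < (1 - μ * a₁) ^ k *
        ((∫ ω, F (x 0 ω) ∂P) - F xstar - a₂ / (μ * a₁)) + a₂ / (μ * a₁))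
    (p : ℝ) (hp0 : 0 < p) (k : ℕ) :
    ENNReal.ofReal (1 - p) ≤
      P {ω | F (x k ω) - F xstar - a₂ / (p * μ * a₁)
        ≤ ((1 - μ * a₁) ^ k / p) *
            ((∫ ω, F (x 0 ω) ∂P) - F xstar - a₂ / (μ * a₁))} := by
  have hc : 0 < μ * a₁ := mul_pos hμ ha₁
  set z := (1 - μ * a₁) ^ k * ((∫ ω, F (x 0 ω) ∂P) - F xstar - a₂ / (μ * a₁))
    + a₂ / (μ * a₁) with hzdef
  have hgap : ∫ ω, (F (x k ω) - F xstar) ∂P ≤ z := by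
    rw [integral_sub (hintF k) (integrable_const _), integral_const, probReal_univ, one_smul]
    exact le_pow_mul_sub_add_of_le_mul_add (u := fun n => (∫ ω, F (x n ω) ∂P) - F xstar)
      (ρ := 1 - μ * a₁) (s := a₂ / (μ * a₁)) (by linarith) (by field_simp; ring)
      (fun n => integral_gap_le_of_condExp_le_descent (ℱ.le n) ha₁.le hsc (hintF n) (hdec n)) k
  have hzp : 0 < z / p := div_pos (hz k) hp0
  calc ENNReal.ofReal (1 - p)
      ≤ ENNReal.ofReal (1 - (∫ ω, (F (x k ω) - F xstar) ∂P) / (z / p)) := by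
        refine ENNReal.ofReal_le_ofReal (sub_le_sub_left ?_ 1)
        rwa [div_le_iff₀ hzp, mul_div_cancel₀ z hp0.ne']
    _ ≤ P {ω | F (x k ω) - F xstar < z / p} :=
        ofReal_one_sub_integral_div_le_measure_lt
          (Filter.Eventually.of_forall fun ω => sub_nonneg.mpr (hmin _))
          ((hintF k).sub (integrable_const _)) hzp
    _ ≤ _ := by
        refine measure_mono fun ω hω => ?_
        have hsplit : z / p = ((1 - μ * a₁) ^ k / p) *
            ((∫ ω, F (x 0 ω) ∂P) - F xstar - a₂ / (μ * a₁)) + a₂ / (p * μ * a₁) := by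
          rw [hzdef]
          field_simp
        simp only [Set.mem_ofPred_eq, hsplit] at hω ⊢
        linarith

/-- (Uniform bound with high probability.) In the linear-convergence
setting (strongly convex `F` with minimizer `x*`, adapted integrable iterates with
`E[F(x_{k+1}) | 𝓕_k] ≤ F(x_k) − (a₁/2)‖∇F(x_k)‖² + a₂` a.s., `a₁, a₂ > 0`, `μ a₁ ≤ 1`),
with `z_k := (1 − μ a₁)^k (E[F(x₀)] − F(x*) − a₂/(μ a₁)) + a₂/(μ a₁) > 0`, for every
`p ∈ (0,1]` and every `k`, with probability at least `1 − p` we have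
`F(x_k) − F(x*) − a₂/(p μ a₁) ≤ ((1 − μ a₁)^k / p)(E[F(x₀)] − F(x*) − a₂/(μ a₁))`. -/
theorem high_probability_bound
    {d : ℕ} {Ω : Type*} {mΩ : MeasurableSpace Ω}
    (P : Measure Ω) [IsProbabilityMeasure P]
    (F : EuclideanSpace ℝ (Fin d) → ℝ) (μ : ℝ) (hμ : 0 < μ)
    (hF : Differentiable ℝ F)
    (xstar : EuclideanSpace ℝ (Fin d)) (hmin : ∀ y, F xstar ≤ F y)
    (hsc : ∀ y, 2 * μ * (F y - F xstar) ≤ ‖gradient F y‖ ^ 2)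
    (ℱ : Filtration ℕ mΩ)
    (x : ℕ → Ω → EuclideanSpace ℝ (Fin d))
    (hadapted : ∀ k, StronglyMeasurable[ℱ k] (x k))
    (hintF : ∀ k, Integrable (fun ω => F (x k ω)) P)
    (hintG : ∀ k, Integrable (fun ω => ‖gradient F (x k ω)‖ ^ 2) P)
    (a₁ a₂ : ℝ) (ha₁ : 0 < a₁) (ha₂ : 0 < a₂) (hμa₁ : μ * a₁ ≤ 1)
    (hdec : ∀ k, (P[(fun ω => F (x (k + 1) ω)) | ℱ k])
        ≤ᵐ[P] fun ω => F (x k ω) - (a₁ / 2) * ‖gradient F (x k ω)‖ ^ 2 + a₂)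
    (hz : ∀ k : ℕ, 0 < (1 - μ * a₁) ^ k *
        ((∫ ω, F (x 0 ω) ∂P) - F xstar - a₂ / (μ * a₁)) + a₂ / (μ * a₁))
    (p : ℝ) (hp0 : 0 < p) (hp1 : p ≤ 1) (k : ℕ) :
    ENNReal.ofReal (1 - p) ≤
      P {ω | F (x k ω) - F xstar - a₂ / (p * μ * a₁)
        ≤ ((1 - μ * a₁) ^ k / p) *
            ((∫ ω, F (x 0 ω) ∂P) - F xstar - a₂ / (μ * a₁))} :=
  high_probability_bound_general P F μ hμ xstar hmin hsc ℱ x hintF a₁ a₂ ha₁ hμa₁ hdec hz p hp0 k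
end

section
/- Let d ≥ 1, let 1 ≤ N ≤ d, and let v ∈ ℝ^d. Averaging uniformly over all subsets T of {1,…,d} of cardinality N, the variance of the randomized coordinate estimator satisfies the exact identity (1 / C(d,N)) · Σ_{T ⊆ {1,…,d}, |T| = N} ‖ (d/N)·[v]_T − v ‖² = ((d − N)/N) · ‖v‖², where C(d,N) is the binomial coefficient. -/
/-!
Write `c = d / N`. Since `[v]_T` is the orthogonal projection of `v` onto the coordinates in `T`,
`‖c [v]_T - v‖² = (c² - 2c) ‖[v]_T‖² + ‖v‖²`. Double counting shows that every coordinate lies in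
`C(d-1, N-1)` of the `N`-subsets, so `∑_T ‖[v]_T‖² = C(d-1, N-1) ‖v‖²`, and `C(d-1, N-1) / C(d, N) = N / d`.
The average is therefore `((c² - 2c) N / d + 1) ‖v‖² = (c - 1) ‖v‖² = ((d - N) / N) ‖v‖²`.
-/

open Finset

/-- `[v]_T`: the vector whose `j`-th coordinate is `v j` if `j ∈ T` and `0` otherwise. -/
noncomputable def restrictCoords {d : ℕ} (T : Finset (Fin d))
    (v : EuclideanSpace ℝ (Fin d)) : EuclideanSpace ℝ (Fin d) :=
  (WithLp.equiv 2 (Fin d → ℝ)).symm fun j => if j ∈ T then v j else 0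

namespace Finset

variable {α : Type*} [DecidableEq α]

theorem filter_mem_powersetCard_succ {s : Finset α} {a : α} (ha : a ∈ s) (n : ℕ) :
    {T ∈ powersetCard (n + 1) s | a ∈ T} = (powersetCard n (s.erase a)).image (insert a) := by
  ext T
  simp only [mem_filter, mem_powersetCard, mem_image]
  constructor
  · rintro ⟨⟨hTs, hT⟩, haT⟩
    exact ⟨T.erase a, ⟨erase_subset_erase a hTs, by rw [card_erase_of_mem haT, hT]; rfl⟩,
      insert_erase haT⟩
  · rintro ⟨U, ⟨hUs, hU⟩, rfl⟩
    have haU : a ∉ U := fun h => (mem_erase.1 (hUs h)).1 rfl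
    exact ⟨⟨insert_subset ha (hUs.trans (erase_subset a s)), by rw [card_insert_of_notMem haU, hU]⟩,
      mem_insert_self a U⟩

theorem card_filter_mem_powersetCard_succ {s : Finset α} {a : α} (ha : a ∈ s) (n : ℕ) :
    #{T ∈ powersetCard (n + 1) s | a ∈ T} = (#s - 1).choose n := by
  have hinj : Set.InjOn (insert a) (powersetCard n (s.erase a) : Set (Finset α)) := by
    intro U hU V hV hUV
    have notMem {W : Finset α} (hW : W ∈ (powersetCard n (s.erase a) : Set (Finset α))) : a ∉ W :=
      fun h => (mem_erase.1 ((mem_powersetCard.1 hW).1 h)).1 rfl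
    rw [← erase_insert (notMem hU), ← erase_insert (notMem hV), hUV]
  rw [filter_mem_powersetCard_succ ha, card_image_of_injOn hinj, card_powersetCard,
    card_erase_of_mem ha]

theorem sum_powersetCard_succ_sum {M : Type*} [AddCommMonoid M] (s : Finset α) (n : ℕ)
    (f : α → M) :
    ∑ T ∈ powersetCard (n + 1) s, ∑ j ∈ T, f j = (#s - 1).choose n • ∑ j ∈ s, f j := by
  rw [sum_comm' (t' := s) (s' := fun j => {T ∈ powersetCard (n + 1) s | j ∈ T}), smul_sum]
  · refine sum_congr rfl fun j hj => ?_
    rw [sum_const, card_filter_mem_powersetCard_succ hj]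
  · intro T j
    simp only [mem_filter, mem_powersetCard]
    exact ⟨fun ⟨hT, hj⟩ => ⟨⟨hT, hj⟩, hT.1 hj⟩, fun ⟨hT, _⟩ => hT⟩

end Finset

section restrictCoords

variable {d : ℕ} (T : Finset (Fin d)) (v : EuclideanSpace ℝ (Fin d))

theorem restrictCoords_apply (j : Fin d) :
    restrictCoords T v j = if j ∈ T then v j else 0 :=
  rfl

theorem norm_restrictCoords_sq : ‖restrictCoords T v‖ ^ 2 = ∑ j ∈ T, v j ^ 2 := by
  simp only [EuclideanSpace.real_norm_sq_eq, restrictCoords_apply, ite_pow, zero_pow two_ne_zero,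
    sum_ite_mem, univ_inter]

theorem norm_smul_restrictCoords_sub_sq (c : ℝ) :
    ‖c • restrictCoords T v - v‖ ^ 2 = (c ^ 2 - 2 * c) * ‖restrictCoords T v‖ ^ 2 + ‖v‖ ^ 2 := by
  simp only [EuclideanSpace.real_norm_sq_eq, mul_sum, ← sum_add_distrib]
  refine sum_congr rfl fun j _ => ?_
  simp only [PiLp.sub_apply, PiLp.smul_apply, smul_eq_mul, restrictCoords_apply]
  split_ifs <;> ring

end restrictCoords

theorem randomized_coordinate_variance_general
    {d N : ℕ} (hN1 : 1 ≤ N) (hNd : N ≤ d)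
    (v : EuclideanSpace ℝ (Fin d)) :
    ((d.choose N : ℝ))⁻¹ *
        ∑ T ∈ Finset.powersetCard N (Finset.univ : Finset (Fin d)),
          ‖((d : ℝ) / (N : ℝ)) • restrictCoords T v - v‖ ^ 2
      = (((d : ℝ) - (N : ℝ)) / (N : ℝ)) * ‖v‖ ^ 2 := by
  obtain ⟨n, rfl⟩ : ∃ n, N = n + 1 := ⟨N - 1, by omega⟩
  obtain ⟨m, rfl⟩ : ∃ m, d = m + 1 := ⟨d - 1, by omega⟩
  have hchoose : ((m + 1) * m.choose n : ℝ) = (m + 1).choose (n + 1) * (n + 1) := by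
    exact_mod_cast Nat.add_one_mul_choose_eq m n
  have hpos : (0 : ℝ) < (m + 1).choose (n + 1) := by exact_mod_cast Nat.choose_pos hNd
  simp only [norm_smul_restrictCoords_sub_sq, sum_add_distrib, ← mul_sum, norm_restrictCoords_sq,
    sum_powersetCard_succ_sum, sum_const, card_powersetCard, card_univ, Fintype.card_fin,
    ← EuclideanSpace.real_norm_sq_eq, nsmul_eq_mul, Nat.add_sub_cancel]
  push_cast
  field_simp
  linear_combination (m + 1 - 2 * (n + 1)) * ‖v‖ ^ 2 * hchoose

/-- For `1 ≤ N ≤ d` and `v ∈ ℝ^d`, averaging uniformly over all subsets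
`T ⊆ {1,…,d}` with `|T| = N`, the randomized coordinate estimator's variance satisfies
`(1/C(d,N)) ∑_{|T|=N} ‖(d/N)[v]_T − v‖² = ((d − N)/N)‖v‖²`. -/
theorem randomized_coordinate_variance
    {d N : ℕ} (hd : 1 ≤ d) (hN1 : 1 ≤ N) (hNd : N ≤ d)
    (v : EuclideanSpace ℝ (Fin d)) :
    ((d.choose N : ℝ))⁻¹ *
        ∑ T ∈ Finset.powersetCard N (Finset.univ : Finset (Fin d)),
          ‖((d : ℝ) / (N : ℝ)) • restrictCoords T v - v‖ ^ 2
      = (((d : ℝ) - (N : ℝ)) / (N : ℝ)) * ‖v‖ ^ 2 :=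
  randomized_coordinate_variance_general hN1 hNd v
end
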